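/- Let G be a finite group, k a commutative ring, and A a G-graded k-algebra. Let B_A be the single-object G-graded k-category with endomorphism algebra A (graded by the grading of A). Then the k-algebra a(B_A # G) of the smash product category B_A # G is isomorphic to the smash product algebra A # k^G; an isomorphism sends the elementary matrix supported at entry ((x₀,t),(x₀,s)) with value f ∈ A_{t⁻¹s} to f ⊗ δ_{s⁻¹}. -/

import Mathlib

/-! Basic notion of a (small) category over a commutative ring `k`:
objects form a type, morphism sets are `k`-modules and composition is `k`-bilinear. -/

structure kCat (k : Type) [CommRing k] where
  Obj : Type
  Hom : Obj → Obj → Type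
  [homAdd : ∀ x y, AddCommGroup (Hom x y)]
  [homMod : ∀ x y, Module k (Hom x y)]
  id : ∀ x, Hom x x
  comp : ∀ {x y z}, Hom y z → Hom x y → Hom x z
  id_comp : ∀ {x y} (f : Hom x y), comp (id y) f = f
  comp_id : ∀ {x y} (f : Hom x y), comp f (id x) = f
  assoc : ∀ {w x y z} (h : Hom y z) (g : Hom x y) (f : Hom w x),
    comp (comp h g) f = comp h (comp g f)
  comp_add_left : ∀ {x y z} (g g' : Hom y z) (f : Hom x y),
    comp (g + g') f = comp g f + comp g' f
  comp_add_right : ∀ {x y z} (g : Hom y z) (f f' : Hom x y),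
    comp g (f + f') = comp g f + comp g f'
  comp_smul_left : ∀ {x y z} (a : k) (g : Hom y z) (f : Hom x y),
    comp (a • g) f = a • comp g f
  comp_smul_right : ∀ {x y z} (a : k) (g : Hom y z) (f : Hom x y),
    comp g (a • f) = a • comp g f

attribute [instance] kCat.homAdd kCat.homMod

/-- Transport of a morphism along equalities of its source and target. -/
def kCat.trans2 {k : Type} [CommRing k] (C : kCat k) {x x' y y' : C.Obj}
    (hx : x = x') (hy : y = y') (f : C.Hom x y) : C.Hom x' y' :=
  cast (by rw [hx, hy]) f

/-- A `k`-linear functor between categories over `k`. -/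
structure kFunctor (k : Type) [CommRing k] (C D : kCat k) where
  obj : C.Obj → D.Obj
  map : ∀ x y, C.Hom x y →ₗ[k] D.Hom (obj x) (obj y)
  map_id : ∀ x, map x x (C.id x) = D.id (obj x)
  map_comp : ∀ {x y z} (g : C.Hom y z) (f : C.Hom x y),
    map x z (C.comp g f) = D.comp (map y z g) (map x y f)

/-- The identity functor. -/
def kFunctor.idF (k : Type) [CommRing k] (C : kCat k) : kFunctor k C C where
  obj := fun x => x
  map := fun _ _ => LinearMap.id
  map_id := fun _ => rfl
  map_comp := fun _ _ => rfl

/-- Composition of `k`-linear functors. -/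
def kFunctor.compF {k : Type} [CommRing k] {C D E : kCat k}
    (F : kFunctor k D E) (H : kFunctor k C D) : kFunctor k C E where
  obj := fun x => F.obj (H.obj x)
  map := fun x y => (F.map _ _).comp (H.map x y)
  map_id := fun x => by simp [H.map_id, F.map_id]
  map_comp := fun g f => by simp [H.map_comp, F.map_comp]

/-- A natural transformation between `k`-linear functors. -/
structure kNatTrans {k : Type} [CommRing k] {C D : kCat k} (F G : kFunctor k C D) where
  app : ∀ x, D.Hom (F.obj x) (G.obj x)
  naturality : ∀ {x y} (f : C.Hom x y),
    D.comp (app y) (F.map x y f) = D.comp (G.map x y f) (app x)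

/-- A natural isomorphism between `k`-linear functors, given by a pair of mutually
inverse natural transformations. -/
structure kNatIso {k : Type} [CommRing k] {C D : kCat k} (F G : kFunctor k C D) where
  hom : kNatTrans F G
  inv : kNatTrans G F
  hom_inv : ∀ x, D.comp (inv.app x) (hom.app x) = D.id (F.obj x)
  inv_hom : ∀ x, D.comp (hom.app x) (inv.app x) = D.id (G.obj x)

/-- An equivalence of categories over `k`. -/
structure kEquivalence (k : Type) [CommRing k] (C D : kCat k) where
  F : kFunctor k C D
  G : kFunctor k D C
  unitIso : kNatIso (kFunctor.idF k C) (kFunctor.compF G F)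
  counitIso : kNatIso (kFunctor.compF F G) (kFunctor.idF k D)

/-- An isomorphism of categories over `k`: a `k`-linear functor which is bijective on
objects and bijective (hence a `k`-module isomorphism) on each morphism module. -/
structure kCatIso (k : Type) [CommRing k] (C D : kCat k) where
  F : kFunctor k C D
  objBij : Function.Bijective F.obj
  homBij : ∀ x y, Function.Bijective (F.map x y)

/-- The full subcategory on the objects satisfying a predicate `P`. -/
def kCat.fullSub {k : Type} [CommRing k] (C : kCat k) (P : C.Obj → Prop) : kCat k where
  Obj := { x : C.Obj // P x }
  Hom := fun x y => C.Hom x.1 y.1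
  homAdd := fun _ _ => inferInstance
  homMod := fun _ _ => inferInstance
  id := fun x => C.id x.1
  comp := fun g f => C.comp g f
  id_comp := fun f => C.id_comp f
  comp_id := fun f => C.comp_id f
  assoc := fun h g f => C.assoc h g f
  comp_add_left := fun g g' f => C.comp_add_left g g' f
  comp_add_right := fun g f f' => C.comp_add_right g f f'
  comp_smul_left := fun a g f => C.comp_smul_left a g f
  comp_smul_right := fun a g f => C.comp_smul_right a g f

/-- The inclusion functor of a full subcategory. -/
def kCat.inclFunctor {k : Type} [CommRing k] (C : kCat k) (P : C.Obj → Prop) :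
    kFunctor k (C.fullSub P) C where
  obj := fun x => x.1
  map := fun _ _ => LinearMap.id
  map_id := fun _ => rfl
  map_comp := fun _ _ => rfl

/-! Direct sum helpers. -/

open DirectSum

/-- The element of a direct sum concentrated in one component. -/
noncomputable def dsSingle {ι : Type} {M : ι → Type} [∀ i, AddCommGroup (M i)]
    (i : ι) (m : M i) : ⨁ i, M i :=
  letI := Classical.decEq ι
  DFinsupp.single i m

/-- The linear inclusion of one component into a direct sum. -/
noncomputable def dsLof (k : Type) [CommRing k] {ι : Type} (M : ι → Type)
    [∀ i, AddCommGroup (M i)] [∀ i, Module k (M i)] (i : ι) : M i →ₗ[k] ⨁ i, M i :=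
  letI := Classical.decEq ι
  DirectSum.lof k ι M i

/-- A family of submodules of `M` is *internal* (i.e. `M` is their internal direct sum)
when the canonical summation map from the direct sum of the submodules to `M`
is bijective. -/
def SubmodulesInternal (k : Type) [CommRing k] {ι : Type} {M : Type}
    [AddCommGroup M] [Module k M] (p : ι → Submodule k M) : Prop :=
  letI := Classical.decEq ι
  Function.Bijective
    (⇑(DFinsupp.sumAddHom (β := fun i => ↥(p i)) fun i => ((p i).subtype).toAddMonoidHom))

/-! `G`-categories over `k`, free actions, the quotient (orbit) category of a free
`G`-category, and the skew category. -/

/-- An action of a group `G` on a category `C` over `k`: an action on objects together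
with `k`-linear maps on morphism modules, compatible with composition, identities and
the group law. -/
structure GAction (k G : Type) [CommRing k] [Group G] (C : kCat k) where
  smulObj : G → C.Obj → C.Obj
  one_smulObj : ∀ x, smulObj 1 x = x
  mul_smulObj : ∀ s t x, smulObj (s * t) x = smulObj s (smulObj t x)
  smulHom : ∀ (s : G) (x y : C.Obj), C.Hom x y →ₗ[k] C.Hom (smulObj s x) (smulObj s y)
  smulHom_comp : ∀ (s : G) {x y z} (g : C.Hom y z) (f : C.Hom x y),
    smulHom s x z (C.comp g f) = C.comp (smulHom s y z g) (smulHom s x y f)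
  smulHom_id : ∀ (s : G) (x), smulHom s x x (C.id x) = C.id (smulObj s x)
  one_smulHom : ∀ {x y} (f : C.Hom x y), HEq (smulHom 1 x y f) f
  mul_smulHom : ∀ (s t : G) {x y} (f : C.Hom x y),
    HEq (smulHom (s * t) x y f) (smulHom s _ _ (smulHom t x y f))

namespace GAction

variable {k G : Type} [CommRing k] [Group G] {C : kCat k}

/-- The action is free when no nontrivial group element fixes an object. -/
def IsFree (A : GAction k G C) : Prop := ∀ (s : G) (x : C.Obj), A.smulObj s x = x → s = 1

/-- The orbit equivalence relation on objects. -/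
def orbitSetoid (A : GAction k G C) : Setoid C.Obj where
  r x y := ∃ s : G, A.smulObj s x = y
  iseqv := by
    refine ⟨fun x => ⟨1, A.one_smulObj x⟩, ?_, ?_⟩
    · rintro x y ⟨s, h⟩
      exact ⟨s⁻¹, by rw [← h, ← A.mul_smulObj, inv_mul_cancel, A.one_smulObj]⟩
    · rintro x y z ⟨s, h⟩ ⟨t, h'⟩
      exact ⟨t * s, by rw [A.mul_smulObj, h, h']⟩

/-- The set of `G`-orbits of objects. -/
def QuotObj (A : GAction k G C) : Type := Quotient A.orbitSetoid

/-- The orbit of an object. -/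
def orb (A : GAction k G C) (x : C.Obj) : A.QuotObj := Quotient.mk A.orbitSetoid x

theorem orb_smul (A : GAction k G C) (s : G) (x : C.Obj) :
    A.orb (A.smulObj s x) = A.orb x :=
  (Quotient.sound ⟨s, rfl⟩ : A.orb x = A.orb (A.smulObj s x)).symm

/-- The index type of pairs `(x, y)` with `x` in the orbit `α` and `y` in the orbit `β`. -/
def PairIdx (A : GAction k G C) (α β : A.QuotObj) : Type :=
  { x : C.Obj // A.orb x = α } × { y : C.Obj // A.orb y = β }

/-- The direct sum `⊕_{x ∈ α, y ∈ β} Hom_C(x, y)`. -/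
def HomSum (A : GAction k G C) (α β : A.QuotObj) : Type :=
  ⨁ p : A.PairIdx α β, C.Hom p.1.1 p.2.1

noncomputable instance (A : GAction k G C) (α β : A.QuotObj) :
    AddCommGroup (A.HomSum α β) :=
  inferInstanceAs (AddCommGroup (⨁ p : A.PairIdx α β, C.Hom p.1.1 p.2.1))

noncomputable instance (A : GAction k G C) (α β : A.QuotObj) :
    Module k (A.HomSum α β) :=
  inferInstanceAs (Module k (⨁ p : A.PairIdx α β, C.Hom p.1.1 p.2.1))

/-- The element of `HomSum` concentrated in the component indexed by `(x, y)`. -/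
noncomputable def homSumSingle (A : GAction k G C) {α β : A.QuotObj} {x y : C.Obj}
    (hx : A.orb x = α) (hy : A.orb y = β) (f : C.Hom x y) : A.HomSum α β :=
  dsSingle (M := fun p : A.PairIdx α β => C.Hom p.1.1 p.2.1) ⟨⟨x, hx⟩, ⟨y, hy⟩⟩ f

/-- The submodule of `HomSum` spanned by the elements `s • f - f`; quotienting by it
produces the largest quotient on which `G` acts trivially. -/
noncomputable def gSub (A : GAction k G C) (α β : A.QuotObj) :
    Submodule k (A.HomSum α β) :=
  Submodule.span k
    {z | ∃ (s : G) (x y : C.Obj) (hx : A.orb x = α) (hy : A.orb y = β) (f : C.Hom x y),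
      z = A.homSumSingle ((A.orb_smul s x).trans hx) ((A.orb_smul s y).trans hy)
            (A.smulHom s x y f)
          - A.homSumSingle hx hy f}

/-- The morphism module of the quotient category `C/G` from the orbit `α` to the
orbit `β`. -/
def QuotHom (A : GAction k G C) (α β : A.QuotObj) : Type :=
  A.HomSum α β ⧸ A.gSub α β

noncomputable instance (A : GAction k G C) (α β : A.QuotObj) :
    AddCommGroup (A.QuotHom α β) :=
  inferInstanceAs (AddCommGroup (A.HomSum α β ⧸ A.gSub α β))

noncomputable instance (A : GAction k G C) (α β : A.QuotObj) :
    Module k (A.QuotHom α β) :=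
  inferInstanceAs (Module k (A.HomSum α β ⧸ A.gSub α β))

/-- The `k`-linear map sending a morphism `f : x → y` of `C` to its class in the
morphism module of the quotient category. -/
noncomputable def projL (A : GAction k G C) {α β : A.QuotObj} {x y : C.Obj}
    (hx : A.orb x = α) (hy : A.orb y = β) : C.Hom x y →ₗ[k] A.QuotHom α β :=
  (A.gSub α β).mkQ.comp
    (letI := Classical.decEq (A.PairIdx α β)
     DirectSum.lof k (A.PairIdx α β) (fun p => C.Hom p.1.1 p.2.1) ⟨⟨x, hx⟩, ⟨y, hy⟩⟩)

/-- The class of a morphism `f : x → y` of `C` in the quotient category. -/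
noncomputable def proj (A : GAction k G C) {α β : A.QuotObj} {x y : C.Obj}
    (hx : A.orb x = α) (hy : A.orb y = β) (f : C.Hom x y) : A.QuotHom α β :=
  A.projL hx hy f

end GAction

/-- The structure of the quotient category `C/G` of a (free) `G`-category `C` over `k`:
its objects are the `G`-orbits of objects of `C`, its morphism modules are the modules
`QuotHom`, and its composition and identities are induced by those of `C` via the
projection, making it a category over `k`. -/
structure QuotStr {k G : Type} [CommRing k] [Group G] {C : kCat k} (A : GAction k G C) where
  comp : ∀ {α β γ : A.QuotObj}, A.QuotHom β γ → A.QuotHom α β → A.QuotHom α γ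
  id : ∀ α : A.QuotObj, A.QuotHom α α
  id_comp : ∀ {α β} (f : A.QuotHom α β), comp (id β) f = f
  comp_id : ∀ {α β} (f : A.QuotHom α β), comp f (id α) = f
  assoc : ∀ {α β γ δ} (h : A.QuotHom γ δ) (g : A.QuotHom β γ) (f : A.QuotHom α β),
    comp (comp h g) f = comp h (comp g f)
  comp_add_left : ∀ {α β γ} (g g' : A.QuotHom β γ) (f : A.QuotHom α β),
    comp (g + g') f = comp g f + comp g' f
  comp_add_right : ∀ {α β γ} (g : A.QuotHom β γ) (f f' : A.QuotHom α β),
    comp g (f + f') = comp g f + comp g f'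
  comp_smul_left : ∀ {α β γ} (a : k) (g : A.QuotHom β γ) (f : A.QuotHom α β),
    comp (a • g) f = a • comp g f
  comp_smul_right : ∀ {α β γ} (a : k) (g : A.QuotHom β γ) (f : A.QuotHom α β),
    comp g (a • f) = a • comp g f
  comp_proj : ∀ {α β γ} {x y z : C.Obj}
    (hx : A.orb x = α) (hy : A.orb y = β) (hz : A.orb z = γ)
    (g : C.Hom y z) (f : C.Hom x y),
    comp (A.proj hy hz g) (A.proj hx hy f) = A.proj hx hz (C.comp g f)
  id_proj : ∀ {α} {x : C.Obj} (hx : A.orb x = α), id α = A.proj hx hx (C.id x)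

/-- The quotient category `C/G` as a category over `k`. -/
noncomputable def QuotStr.toKCat {k G : Type} [CommRing k] [Group G] {C : kCat k}
    {A : GAction k G C} (Q : QuotStr A) : kCat k where
  Obj := A.QuotObj
  Hom := A.QuotHom
  homAdd := fun _ _ => inferInstance
  homMod := fun _ _ => inferInstance
  id := Q.id
  comp := Q.comp
  id_comp := Q.id_comp
  comp_id := Q.comp_id
  assoc := Q.assoc
  comp_add_left := Q.comp_add_left
  comp_add_right := Q.comp_add_right
  comp_smul_left := Q.comp_smul_left
  comp_smul_right := Q.comp_smul_right

/-! Gradings of a category over `k` by a group, and the smash product category. -/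

/-- A `G`-grading of a category `B` over `k`: each morphism module decomposes as a
direct sum `Hom(x,y) = ⊕_{s ∈ G} Hom^s(x,y)` with `Hom^t ∘ Hom^s ⊆ Hom^{ts}`
and identities in degree `1`. -/
structure Grading (k G : Type) [CommRing k] [Group G] (B : kCat k) where
  deg : G → ∀ x y : B.Obj, Submodule k (B.Hom x y)
  internal : ∀ x y : B.Obj, SubmodulesInternal k (fun s => deg s x y)
  comp_mem : ∀ {x y z : B.Obj} {s t : G} {g : B.Hom y z} {f : B.Hom x y},
    g ∈ deg t y z → f ∈ deg s x y → B.comp g f ∈ deg (t * s) x z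
  id_mem : ∀ x : B.Obj, B.id x ∈ deg 1 x x

/-- A small helper: elements of equal submodules with equal values are heterogeneously
equal. -/
theorem Submodule.heq_mk {k M : Type} [CommRing k] [AddCommGroup M] [Module k M]
    {p q : Submodule k M} (h : p = q) (v : M) (hp : v ∈ p) (hq : v ∈ q) :
    HEq (⟨v, hp⟩ : p) (⟨v, hq⟩ : q) := by subst h; rfl

/-- The smash product category `B#G` of a `G`-graded category `B` over `k`:
objects are pairs `(x, s)` with `x` an object of `B` and `s ∈ G`, and
`Hom((x,s),(y,t)) = Hom_B^{t⁻¹s}(x, y)`, with composition induced by the graded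
composition of `B`. -/
@[reducible]
def smashCat {k G : Type} [CommRing k] [Group G] (B : kCat k) (gr : Grading k G B) :
    kCat k where
  Obj := B.Obj × G
  Hom := fun p q => ↥(gr.deg (q.2⁻¹ * p.2) p.1 q.1)
  homAdd := fun _ _ => inferInstance
  homMod := fun _ _ => inferInstance
  id := fun p => ⟨B.id p.1, by rw [inv_mul_cancel]; exact gr.id_mem p.1⟩
  comp := fun {p q r} g f => ⟨B.comp g.1 f.1, by
    have h : (r.2⁻¹ * q.2) * (q.2⁻¹ * p.2) = r.2⁻¹ * p.2 := by group
    rw [← h]; exact gr.comp_mem g.2 f.2⟩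
  id_comp := fun f => Subtype.ext (B.id_comp f.1)
  comp_id := fun f => Subtype.ext (B.comp_id f.1)
  assoc := fun h g f => Subtype.ext (B.assoc h.1 g.1 f.1)
  comp_add_left := fun g g' f => Subtype.ext
    (by simpa using B.comp_add_left g.1 g'.1 f.1)
  comp_add_right := fun g f f' => Subtype.ext
    (by simpa using B.comp_add_right g.1 f.1 f'.1)
  comp_smul_left := fun a g f => Subtype.ext
    (by simpa using B.comp_smul_left a g.1 f.1)
  comp_smul_right := fun a g f => Subtype.ext
    (by simpa using B.comp_smul_right a g.1 f.1)

/-- The canonical (free) action of `G` on the smash product category `B#G`: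
`u · (x, s) = (x, us)` on objects, identity on the morphism components. -/
def smashAction {k G : Type} [CommRing k] [Group G] (B : kCat k) (gr : Grading k G B) :
    GAction k G (smashCat B gr) where
  smulObj := fun u p => (p.1, u * p.2)
  one_smulObj := fun p => by cases p; simp
  mul_smulObj := fun s t p => by cases p; simp [mul_assoc]
  smulHom := fun u p q =>
    { toFun := fun f => ⟨f.1, by
        have h : ((u * q.2)⁻¹ * (u * p.2)) = q.2⁻¹ * p.2 := by group
        rw [h]; exact f.2⟩
      map_add' := fun f g => rfl
      map_smul' := fun a f => rfl }
  smulHom_comp := fun s {p q r} g f => Subtype.ext rfl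
  smulHom_id := fun s p => Subtype.ext rfl
  one_smulHom := fun {p q} f => by
    have h : gr.deg (((1 : G) * q.2)⁻¹ * ((1 : G) * p.2)) p.1 q.1
        = gr.deg (q.2⁻¹ * p.2) p.1 q.1 := by rw [one_mul, one_mul]
    exact Submodule.heq_mk h f.1 (h.symm ▸ f.2) f.2
  mul_smulHom := fun s t {p q} f => by
    have e1 : s * t * q.2 = s * (t * q.2) := mul_assoc s t q.2
    have e2 : s * t * p.2 = s * (t * p.2) := mul_assoc s t p.2
    have h : gr.deg ((s * t * q.2)⁻¹ * (s * t * p.2)) p.1 q.1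
        = gr.deg ((s * (t * q.2))⁻¹ * (s * (t * p.2))) p.1 q.1 := by rw [e1, e2]
    have hmem : f.1 ∈ gr.deg ((s * (t * q.2))⁻¹ * (s * (t * p.2))) p.1 q.1 := by
      have h2 : ((s * (t * q.2))⁻¹ * (s * (t * p.2))) = q.2⁻¹ * p.2 := by group
      rw [h2]; exact f.2
    exact Submodule.heq_mk h f.1 (h ▸ hmem) hmem

/-- The Galois covering (projection) functor `B#G → B`, `(x,s) ↦ x` on objects and the
inclusion of the degree component on morphisms. -/
def smashProjFunctor {k G : Type} [CommRing k] [Group G] (B : kCat k)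
    (gr : Grading k G B) : kFunctor k (smashCat B gr) B where
  obj := fun p => p.1
  map := fun p q => (gr.deg (q.2⁻¹ * p.2) p.1 q.1).subtype
  map_id := fun _ => rfl
  map_comp := fun _ _ => rfl

/-! The `k`-algebra `a(C)` associated to a category over `k` with finitely many
objects, characterized by its universal matrix-algebra properties; skew group
algebras. -/

/-- `R` is the `k`-algebra `a(C)` of the category `C` over `k` (the direct sum of all
morphism modules with the matrix product induced by composition) when the given
embeddings `ι` of the morphism modules satisfy the matrix product rules, the sum of
the identities is the unit, and `R` is the direct sum of the images. -/
def IsCatAlgebra (k : Type) [CommRing k] (C : kCat k) (R : Type) [Ring R] [Algebra k R]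
    (ι : ∀ x y : C.Obj, C.Hom x y →ₗ[k] R) : Prop :=
  letI := Classical.decEq (C.Obj × C.Obj)
  (∀ {x y z : C.Obj} (g : C.Hom y z) (f : C.Hom x y),
      ι y z g * ι x y f = ι x z (C.comp g f)) ∧
  (∀ {x y y' z : C.Obj} (g : C.Hom y' z) (f : C.Hom x y), y ≠ y' → ι y' z g * ι x y f = 0) ∧
  ((∑ᶠ x : C.Obj, ι x x (C.id x)) = 1) ∧
  Function.Bijective
    (⇑(DFinsupp.sumAddHom (β := fun p : C.Obj × C.Obj => C.Hom p.1 p.2)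
      fun p => (ι p.1 p.2).toAddMonoidHom))

/-- `D` is the skew group algebra `A[G]` of the `G`-algebra `(A, σ)` when it contains
`A` via `jA` and invertible elements `jG s` subject to `s·a = σ_s(a)·s`, and is free
over `A` with basis the `jG s`. -/
def IsSkewGroupAlgebra (k G : Type) [CommRing k] [Group G] (A : Type) [Ring A]
    [Algebra k A] (σ : G →* (A ≃ₐ[k] A)) (D : Type) [Ring D] [Algebra k D]
    (jA : A →ₐ[k] D) (jG : G →* Dˣ) : Prop :=
  (∀ (s : G) (a : A), (jG s : D) * jA a = jA (σ s a) * (jG s : D)) ∧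
  Function.Bijective (fun f : G →₀ A => f.sum fun s a => jA a * (jG s : D))


/-- The single object category over `k` with endomorphism algebra `A`. -/
def singleObjCat (k : Type) [CommRing k] (A : Type) [Ring A] [Algebra k A] : kCat k where
  Obj := PUnit
  Hom := fun _ _ => A
  homAdd := fun _ _ => inferInstance
  homMod := fun _ _ => inferInstance
  id := fun _ => 1
  comp := fun g f => g * f
  id_comp := fun f => one_mul f
  comp_id := fun f => mul_one f
  assoc := fun h g f => mul_assoc h g f
  comp_add_left := fun g g' f => add_mul g g' f
  comp_add_right := fun g f f' => mul_add g f f'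
  comp_smul_left := fun a g f => smul_mul_assoc a g f
  comp_smul_right := fun a g f => mul_smul_comm a g f

/-- The grading of the single object category associated to a `G`-graded
`k`-algebra `A`. -/
def singleObjGrading (k G : Type) [CommRing k] [Group G] (A : Type) [Ring A]
    [Algebra k A] (𝒜 : G → Submodule k A) (hint : SubmodulesInternal k 𝒜)
    (hmul : ∀ {s t : G} {a b : A}, a ∈ 𝒜 t → b ∈ 𝒜 s → a * b ∈ 𝒜 (t * s))
    (hone : (1 : A) ∈ 𝒜 1) : Grading k G (singleObjCat k A) where
  deg := fun s _ _ => 𝒜 s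
  internal := fun _ _ => hint
  comp_mem := fun hg hf => hmul hg hf
  id_mem := fun _ => hone

/-! ### Auxiliary machinery for the Cibils–Marcos proposition -/

set_option linter.unusedSectionVars false

theorem single_mul_single_ne' {G k : Type} [DecidableEq G] [CommRing k] (v w : G) (h : v ≠ w) :
    (Pi.single v 1 : G → k) * Pi.single w 1 = 0 := by
  funext x; by_cases hx : x = v <;> by_cases hy : x = w <;>
    simp [Pi.single_apply, hx, hy] <;>
  (intro h'; first | exact (h h').elim | exact (h h'.symm).elim)

theorem single_mul_single_eq' {G k : Type} [DecidableEq G] [CommRing k] (v : G) :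
    (Pi.single v 1 : G → k) * Pi.single v 1 = Pi.single v 1 := by
  funext x; by_cases hx : x = v <;> simp [Pi.single_apply, hx]

theorem toModule_coe_eq_sumAddHom' {k ι : Type} [CommRing k] [DecidableEq ι]
    {M : ι → Type} [∀ i, AddCommGroup (M i)] [∀ i, Module k (M i)]
    {N : Type} [AddCommGroup N] [Module k N] (φ : ∀ i, M i →ₗ[k] N) :
    ⇑(DirectSum.toModule k ι N φ)
      = ⇑(DFinsupp.sumAddHom (β := M) fun i => (φ i).toAddMonoidHom) := by
  have h : (DirectSum.toModule k ι N φ).toAddMonoidHom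
      = DFinsupp.sumAddHom (β := M) fun i => (φ i).toAddMonoidHom := by
    apply DFinsupp.addHom_ext
    intro i y
    simp only [LinearMap.toAddMonoidHom_coe, DFinsupp.sumAddHom_single]
    have h2 : (DFinsupp.single i y : Π₀ i, M i) = DirectSum.lof k ι M i y := rfl
    rw [h2]; exact DirectSum.toModule_lof k i y
  funext x; exact DFunLike.congr_fun h x

theorem sumAddHom_decEq_irrel {ι : Type} {β : ι → Type} [∀ i, AddZeroClass (β i)]
    {γ : Type} [AddCommMonoid γ] (d1 d2 : DecidableEq ι) (f : ∀ i, β i →+ γ) :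
    ⇑(@DFinsupp.sumAddHom ι γ β d1 _ _ f) = ⇑(@DFinsupp.sumAddHom ι γ β d2 _ _ f) := by
  rw [Subsingleton.elim d1 d2]

section SmashAux
open DirectSum TensorProduct

variable {k G A : Type} [CommRing k] [Group G] [Fintype G] [DecidableEq G]
  [Ring A] [Algebra k A] (𝒜 : G → Submodule k A)

/-- Index type for the smash product category algebra. -/
abbrev SmIdx (G : Type) : Type := (PUnit × G) × (PUnit × G)

noncomputable def smPsi : (⨁ pq : SmIdx G, ↥(𝒜 (pq.2.2⁻¹ * pq.1.2))) →ₗ[k] A ⊗[k] (G → k) :=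
  DirectSum.toModule k _ _ fun pq =>
    ((TensorProduct.mk k A (G → k)).flip (Pi.single pq.1.2⁻¹ 1)).comp (𝒜 _).subtype

set_option maxHeartbeats 1000000 in
theorem smPsi_lof (pq : SmIdx G) (f : ↥(𝒜 (pq.2.2⁻¹ * pq.1.2))) :
    smPsi 𝒜 (DirectSum.lof k (SmIdx G) (fun pq => ↥(𝒜 (pq.2.2⁻¹ * pq.1.2))) pq f)
      = f.1 ⊗ₜ[k] Pi.single pq.1.2⁻¹ 1 := by
  unfold smPsi; rw [DirectSum.toModule_lof]; rfl

variable (hb : Function.Bijective ⇑(DirectSum.coeLinearMap 𝒜))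

noncomputable def smDecomp : A ≃ₗ[k] ⨁ g : G, ↥(𝒜 g) :=
  (LinearEquiv.ofBijective (DirectSum.coeLinearMap 𝒜) hb).symm

theorem smDecomp_of_mem {g : G} {a : A} (ha : a ∈ 𝒜 g) :
    smDecomp 𝒜 hb a = DirectSum.lof k G (fun g => ↥(𝒜 g)) g ⟨a, ha⟩ := by
  rw [smDecomp]
  rw [LinearEquiv.symm_apply_eq]
  rw [LinearEquiv.ofBijective_apply]
  rw [DirectSum.lof_eq_of, DirectSum.coeLinearMap_of]

noncomputable def smRho (u : G) : A →ₗ[k] ⨁ pq : SmIdx G, ↥(𝒜 (pq.2.2⁻¹ * pq.1.2)) :=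
  (DirectSum.toModule k G _ fun g =>
      (DirectSum.lof k (SmIdx G) (fun pq => ↥(𝒜 (pq.2.2⁻¹ * pq.1.2)))
          ((PUnit.unit, u⁻¹), (PUnit.unit, u⁻¹ * g⁻¹))).comp
        (LinearEquiv.ofEq (𝒜 g) (𝒜 ((u⁻¹ * g⁻¹)⁻¹ * u⁻¹))
          (congrArg 𝒜 (by group))).toLinearMap)
    ∘ₗ (smDecomp 𝒜 hb).toLinearMap

theorem smRho_of_mem (u : G) {g : G} {a : A} (ha : a ∈ 𝒜 g) :
    smRho 𝒜 hb u a
      = DirectSum.lof k (SmIdx G) (fun pq => ↥(𝒜 (pq.2.2⁻¹ * pq.1.2)))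
          ((PUnit.unit, u⁻¹), (PUnit.unit, u⁻¹ * g⁻¹))
          ((LinearEquiv.ofEq (𝒜 g) (𝒜 ((u⁻¹ * g⁻¹)⁻¹ * u⁻¹)) (congrArg 𝒜 (by group)))
            ⟨a, ha⟩) := by
  rw [smRho, LinearMap.comp_apply, LinearEquiv.coe_toLinearMap, smDecomp_of_mem 𝒜 hb ha,
    DirectSum.toModule_lof]
  rfl

noncomputable def smXi : A ⊗[k] (G → k) →ₗ[k] ⨁ pq : SmIdx G, ↥(𝒜 (pq.2.2⁻¹ * pq.1.2)) :=
  TensorProduct.lift (LinearMap.flip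
    { toFun := fun δ => ∑ u : G, δ u • smRho 𝒜 hb u
      map_add' := fun δ δ' => by simp [add_smul, Finset.sum_add_distrib]
      map_smul' := fun c δ => by simp [smul_smul, Finset.smul_sum]  })

theorem smXi_tmul_single (w : G) (a : A) :
    smXi 𝒜 hb (a ⊗ₜ[k] Pi.single w 1) = smRho 𝒜 hb w a := by
  rw [smXi, TensorProduct.lift.tmul]
  simp only [LinearMap.flip_apply, LinearMap.coe_mk, AddHom.coe_mk, LinearMap.coe_sum,
    Finset.sum_apply, LinearMap.smul_apply]
  rw [Finset.sum_eq_single w]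
  · simp
  · intro u _ hu; simp [Pi.single_apply, hu]
  · intro h; exact absurd (Finset.mem_univ w) h

theorem smHeq {p q : Submodule k A} (h : p = q) {v : ↥p} {w : ↥q} (hv : (v : A) = w) :
    HEq v w := by subst h; rw [Subtype.ext hv]

theorem smLofCongr {M : SmIdx G → Type} [∀ i, AddCommGroup (M i)] [∀ i, Module k (M i)]
    {i i' : SmIdx G} (h : i = i') {v : M i} {v' : M i'} (hv : HEq v v') :
    DirectSum.lof k (SmIdx G) M i v = DirectSum.lof k (SmIdx G) M i' v' := by
  subst h; rw [eq_of_heq hv]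

theorem smXi_psi :
    (smXi 𝒜 hb).comp (smPsi 𝒜) = LinearMap.id := by
  apply DirectSum.linearMap_ext
  intro pq
  apply LinearMap.ext; intro f
  simp only [LinearMap.comp_apply, LinearMap.id_apply, smPsi_lof, smXi_tmul_single]
  rw [smRho_of_mem 𝒜 hb pq.1.2⁻¹ f.2]
  refine smLofCongr ?_ ?_
  · obtain ⟨⟨⟨⟩, s⟩, ⟨⟨⟩, t⟩⟩ := pq
    simp only [Prod.mk.injEq]
    constructor
    · exact ⟨trivial, inv_inv s⟩
    · refine ⟨trivial, ?_⟩; group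
  · exact smHeq (congrArg 𝒜 (by group)) (by simp)

theorem smPsi_rho (w : G) (a : A) :
    smPsi 𝒜 (smRho 𝒜 hb w a) = a ⊗ₜ[k] Pi.single w 1 := by
  conv_lhs => rw [show a = DirectSum.coeLinearMap 𝒜 (smDecomp 𝒜 hb a) from
    ((LinearEquiv.ofBijective (DirectSum.coeLinearMap 𝒜) hb).apply_symm_apply a).symm]
  conv_rhs => rw [show a = DirectSum.coeLinearMap 𝒜 (smDecomp 𝒜 hb a) from
    ((LinearEquiv.ofBijective (DirectSum.coeLinearMap 𝒜) hb).apply_symm_apply a).symm]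
  generalize smDecomp 𝒜 hb a = x
  induction x using DirectSum.induction_on with
  | zero => simp
  | of g v =>
      rw [DirectSum.coeLinearMap_of]
      rw [smRho_of_mem 𝒜 hb w v.2]
      rw [smPsi_lof]
      simp
  | add x y hx hy => simp only [map_add, TensorProduct.add_tmul, hx, hy]

theorem smPsi_xi :
    (smPsi 𝒜).comp (smXi 𝒜 hb) = LinearMap.id := by
  apply TensorProduct.ext
  apply LinearMap.ext; intro a
  apply LinearMap.ext; intro δ
  simp only [LinearMap.compr₂ₛₗ_apply, TensorProduct.mk_apply, LinearMap.comp_apply,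
    LinearMap.id_apply]
  conv_lhs => rw [show δ = ∑ w : G, (δ w) • (Pi.single w 1 : G → k) by
    conv_lhs => rw [← Finset.univ_sum_single δ]
    exact Finset.sum_congr rfl fun w _ => by
      rw [← Pi.single_smul, smul_eq_mul, mul_one]]
  conv_rhs => rw [show δ = ∑ w : G, (δ w) • (Pi.single w 1 : G → k) by
    conv_lhs => rw [← Finset.univ_sum_single δ]
    exact Finset.sum_congr rfl fun w _ => by
      rw [← Pi.single_smul, smul_eq_mul, mul_one]]
  rw [TensorProduct.tmul_sum]
  simp only [map_sum, TensorProduct.tmul_smul, map_smul]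
  refine Finset.sum_congr rfl fun w _ => ?_
  rw [smXi_tmul_single, smPsi_rho]

noncomputable def smPsiEquiv :
    (⨁ pq : SmIdx G, ↥(𝒜 (pq.2.2⁻¹ * pq.1.2))) ≃ₗ[k] A ⊗[k] (G → k) :=
  LinearEquiv.ofLinear (smPsi 𝒜) (smXi 𝒜 hb) (smPsi_xi 𝒜 hb) (smXi_psi 𝒜 hb)

end SmashAux

set_option maxHeartbeats 4000000 in
open TensorProduct in
/-- **Proposition (Cibils–Marcos).** Let `G` be a finite group and `A` a `G`-graded
`k`-algebra, and let `B_A` be the associated single object `G`-graded category over `k`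
with endomorphism algebra `A`. Then the `k`-algebra `a(B_A # G)` of the smash product
category `B_A # G` is isomorphic to the smash product algebra `A # k^G`; an isomorphism
sends the elementary matrix supported at entry `((x₀,t),(x₀,s))` with value
`f ∈ A_{t⁻¹s}` to `f ⊗ δ_{s⁻¹}`. -/
theorem catAlgebra_smash_iso_smash_algebra (k G A : Type) [CommRing k] [Group G]
    [Fintype G] [DecidableEq G] [Ring A] [Algebra k A] (𝒜 : G → Submodule k A)
    (hint : SubmodulesInternal k 𝒜)
    (hmul : ∀ {s t : G} {a b : A}, a ∈ 𝒜 t → b ∈ 𝒜 s → a * b ∈ 𝒜 (t * s))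
    (hone : (1 : A) ∈ 𝒜 1)
    -- `M`, together with the embeddings `ι`, is the algebra `a(B_A # G)` of the
    -- smash product category `B_A # G`
    (M : Type) [Ring M] [Algebra k M]
    (ι : ∀ p q : PUnit × G,
      (smashCat (singleObjCat k A) (singleObjGrading k G A 𝒜 hint hmul hone)).Hom p q
        →ₗ[k] M)
    (hM : IsCatAlgebra k (smashCat (singleObjCat k A)
      (singleObjGrading k G A 𝒜 hint hmul hone)) M ι)
    -- `S`, with the linear parametrization `j`, is the smash product algebra `A # k^G`
    (S : Type) [Ring S] [Algebra k S] (j : A ⊗[k] (G → k) ≃ₗ[k] S)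
    (hj : ∀ (t s : G) (b : A), b ∈ 𝒜 s → ∀ (a : A) (δ' : G → k),
      j (a ⊗ₜ[k] Pi.single t 1) * j (b ⊗ₜ[k] δ')
        = j ((a * b) ⊗ₜ[k] ((Pi.single (s⁻¹ * t) 1 : G → k) * δ')))
    (hj1 : j ((1 : A) ⊗ₜ[k] ∑ w : G, (Pi.single w 1 : G → k)) = 1) :
    ∃ φ : M ≃ₐ[k] S, ∀ (t s : G)
      (f : (smashCat (singleObjCat k A)
        (singleObjGrading k G A 𝒜 hint hmul hone)).Hom (PUnit.unit, s) (PUnit.unit, t)),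
      φ (ι (PUnit.unit, s) (PUnit.unit, t) f) = j (f.1 ⊗ₜ[k] Pi.single s⁻¹ 1) := by
  classical
  obtain ⟨hMcomp, hMzero, hMone, hMbij⟩ := hM
  -- the grading is internal, with the ambient decidability instance
  have hb : Function.Bijective ⇑(DirectSum.coeLinearMap 𝒜) := by
    have h1 : ⇑(DirectSum.coeLinearMap 𝒜)
        = ⇑(DFinsupp.sumAddHom (β := fun g => ↥(𝒜 g))
            fun g => ((𝒜 g).subtype).toAddMonoidHom) :=
      toModule_coe_eq_sumAddHom' _
    rw [h1, sumAddHom_decEq_irrel _ (Classical.decEq G)]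
    exact hint
  -- the category algebra map
  set C := smashCat (singleObjCat k A) (singleObjGrading k G A 𝒜 hint hmul hone) with hC
  let T : (⨁ pq : SmIdx G, ↥(𝒜 (pq.2.2⁻¹ * pq.1.2))) →ₗ[k] M :=
    DirectSum.toModule k (SmIdx G) M (fun pq => ι pq.1 pq.2)
  have hTof : ∀ (pq : SmIdx G) (v : ↥(𝒜 (pq.2.2⁻¹ * pq.1.2))),
      T (DirectSum.of (fun pq : SmIdx G => ↥(𝒜 (pq.2.2⁻¹ * pq.1.2))) pq v)
        = ι pq.1 pq.2 v := by
    intro pq v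
    rw [← DirectSum.lof_eq_of k (SmIdx G) (fun pq => ↥(𝒜 (pq.2.2⁻¹ * pq.1.2))) pq v]
    exact DirectSum.toModule_lof k (φ := fun pq : SmIdx G => ι pq.1 pq.2) pq v
  have hTbij : Function.Bijective ⇑T := by
    have h1 : ⇑T = ⇑(DFinsupp.sumAddHom
        (β := fun pq : SmIdx G => ↥(𝒜 (pq.2.2⁻¹ * pq.1.2)))
        fun pq => (ι pq.1 pq.2).toAddMonoidHom) := toModule_coe_eq_sumAddHom' _
    have h2 := sumAddHom_decEq_irrel (β := fun pq : SmIdx G => ↥(𝒜 (pq.2.2⁻¹ * pq.1.2)))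
      inferInstance (Classical.decEq (SmIdx G)) (fun pq => (ι pq.1 pq.2).toAddMonoidHom)
    rw [h1]
    exact (congrArg Function.Bijective h2).mpr hMbij
  let E : (⨁ pq : SmIdx G, ↥(𝒜 (pq.2.2⁻¹ * pq.1.2))) ≃ₗ[k] M :=
    LinearEquiv.ofBijective T hTbij
  let Φ : M ≃ₗ[k] S := E.symm.trans ((smPsiEquiv 𝒜 hb).trans j)
  have key : ∀ (p q : PUnit × G) (f : C.Hom p q),
      Φ (ι p q f) = j (f.1 ⊗ₜ[k] Pi.single p.2⁻¹ 1) := by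
    intro p q f
    have h1 : ι p q f
        = T (DirectSum.lof k (SmIdx G) (fun pq => ↥(𝒜 (pq.2.2⁻¹ * pq.1.2))) (p, q) f) :=
      (DirectSum.toModule_lof k (φ := fun pq : SmIdx G => ι pq.1 pq.2) (p, q) f).symm
    rw [h1]
    have h2 : ∀ x, Φ (T x) = j (smPsi 𝒜 x) := by
      intro x
      show ((smPsiEquiv 𝒜 hb).trans j) (E.symm (E x)) = _
      rw [E.symm_apply_apply]
      rfl
    rw [h2]
    exact congrArg j (smPsi_lof 𝒜 (p, q) f)
  have hone1 : Φ 1 = 1 := by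
    have h0 : (∑ x : PUnit × G, ι x x (C.id x)) = 1 := by
      rw [← finsum_eq_sum_of_fintype]; exact hMone
    rw [← h0, map_sum]
    have h3 : ∀ x : PUnit × G, Φ (ι x x (C.id x))
        = j ((1 : A) ⊗ₜ[k] Pi.single x.2⁻¹ 1) := fun x => key x x (C.id x)
    rw [Finset.sum_congr rfl fun x _ => h3 x]
    rw [← map_sum, ← TensorProduct.tmul_sum]
    rw [show (∑ x : PUnit × G, (Pi.single x.2⁻¹ 1 : G → k)) = ∑ w : G, Pi.single w 1 by
      rw [Fintype.sum_prod_type]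
      simp only [Finset.univ_unique, Finset.sum_singleton]
      exact Equiv.sum_comp (Equiv.inv G) (fun w => (Pi.single w 1 : G → k))]
    exact hj1
  have base : ∀ (pq pq' : SmIdx G) (g1 : ↥(𝒜 (pq.2.2⁻¹ * pq.1.2)))
      (f1 : ↥(𝒜 (pq'.2.2⁻¹ * pq'.1.2))),
      Φ (ι pq.1 pq.2 g1 * ι pq'.1 pq'.2 f1)
        = Φ (ι pq.1 pq.2 g1) * Φ (ι pq'.1 pq'.2 f1) := by
    rintro ⟨⟨⟨⟩, u⟩, ⟨⟨⟩, r⟩⟩ ⟨⟨⟨⟩, s⟩, ⟨⟨⟩, t⟩⟩ g1 f1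
    by_cases h : t = u
    · subst h
      rw [hMcomp g1 f1]
      erw [key, key, key]
      rw [hj t⁻¹ (t⁻¹ * s) f1.1 f1.2 g1.1 (Pi.single s⁻¹ 1)]
      rw [show ((t⁻¹ * s)⁻¹ * t⁻¹ : G) = s⁻¹ by group, single_mul_single_eq']
      rfl
    · rw [hMzero g1 f1 (by
        intro hh
        exact h (congrArg Prod.snd hh))]
      rw [map_zero]
      erw [key, key]
      rw [hj u⁻¹ (t⁻¹ * s) f1.1 f1.2 g1.1 (Pi.single s⁻¹ 1)]
      rw [single_mul_single_ne' ((t⁻¹ * s)⁻¹ * u⁻¹) s⁻¹ (by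
        intro hh
        apply h
        have h3 : s⁻¹ * (t * u⁻¹) = s⁻¹ := by
          calc s⁻¹ * (t * u⁻¹) = (t⁻¹ * s)⁻¹ * u⁻¹ := by group
            _ = s⁻¹ := hh
        have h4 : s⁻¹ * (t * u⁻¹) = s⁻¹ * 1 := by rw [mul_one]; exact h3
        exact mul_inv_eq_one.mp (mul_left_cancel h4))]
      rw [TensorProduct.tmul_zero]
      exact (LinearEquiv.map_zero j).symm
  have hmul2 : ∀ x y : M, Φ (x * y) = Φ x * Φ y := by
    have base2 : ∀ dx dy, Φ (T dx * T dy) = Φ (T dx) * Φ (T dy) := by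
      intro dx
      refine DirectSum.induction_on dx ?_ ?_ ?_
      · intro dy; simp
      · intro pq g1 dy
        refine DirectSum.induction_on dy ?_ ?_ ?_
        · simp
        · intro pq' f1
          rw [hTof, hTof]
          exact base pq pq' g1 f1
        · intro a b ha hb'
          simp only [map_add, mul_add, ha, hb']
      · intro a b ha hb' dy
        simp only [map_add, add_mul, ha dy, hb' dy]
    intro x y
    obtain ⟨dx, rfl⟩ := hTbij.2 x
    obtain ⟨dy, rfl⟩ := hTbij.2 y
    exact base2 dx dy
  refine ⟨AlgEquiv.ofLinearEquiv Φ hone1 hmul2, ?_⟩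
  intro t s f
  rw [AlgEquiv.ofLinearEquiv_apply]
  exact key (PUnit.unit, s) (PUnit.unit, t) f
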